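/- arXiv:1310.2397 — 2 statements merged into one kernel-verified Lean document; each statement's English description precedes it below -/
import Mathlib

section
/- If T : 𝐇 ⇉ ℝ² is a maximal H-cyclically monotone set-valued map with dom(T) = 𝐇, then there exists an H-convex function u : 𝐇 → ℝ such that T(g) = ∂_H u(g) for every g ∈ 𝐇. -/
/-- The Heisenberg group as a set: ℝ³. -/
abbrev Heis : Type := ℝ × ℝ × ℝ

/-- The first layer V₁ of the Lie algebra, identified with ℝ². -/
abbrev V2 : Type := ℝ × ℝ

/-- Heisenberg group law: (x,y,t)∘(x',y',t') = (x+x', y+y', t+t'+2(x'y−xy')). -/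
def hmul (g g' : Heis) : Heis :=
  (g.1 + g'.1, g.2.1 + g'.2.1, g.2.2 + g'.2.2 + 2 * (g'.1 * g.2.1 - g.1 * g'.2.1))

/-- Group inverse in the Heisenberg group. -/
def hinv (g : Heis) : Heis := (-g.1, -g.2.1, -g.2.2)

/-- Exponential of a horizontal vector: exp (a,b) = (a,b,0). -/
def hexp (w : V2) : Heis := (w.1, w.2, 0)

/-- Projection ξ₁ : 𝐇 → V₁, ξ₁(x,y,t) = (x,y). -/
def xi1 (g : Heis) : V2 := (g.1, g.2.1)

/-- Euclidean inner product on ℝ². -/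
def dot (v w : V2) : ℝ := v.1 * w.1 + v.2 * w.2

/-- Euclidean norm on ℝ². -/
noncomputable def nrm (v : V2) : ℝ := Real.sqrt (v.1 ^ 2 + v.2 ^ 2)

/-- The horizontal plane through g: H_g = {g ∘ exp w : w ∈ ℝ²}. -/
def hplane (g : Heis) : Set Heis := {h | ∃ w : V2, h = hmul g (hexp w)}

/-- H-monotonicity of a set-valued map T : 𝐇 ⇉ ℝ². -/
def HMonotone (T : Heis → Set V2) : Prop :=
  ∀ g g' : Heis, g' ∈ hplane g → ∀ v ∈ T g, ∀ v' ∈ T g',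
    0 ≤ dot (v' - v) (xi1 g' - xi1 g)

/-- Maximal H-monotonicity: T is H-monotone and there is no H-monotone map
strictly extending it. -/
def MaximalHMonotone (T : Heis → Set V2) : Prop :=
  HMonotone T ∧
    ¬ ∃ T' : Heis → Set V2, HMonotone T' ∧ (∀ g, T g ⊆ T' g) ∧ ∃ g, T g ⊂ T' g

/-- g₀, …, gₙ is a closed H-sequence: g_{i+1} ∈ H_{g_i} for i < n, and g₀ ∈ H_{gₙ}. -/
def IsClosedHSeq (n : ℕ) (g : ℕ → Heis) : Prop :=
  (∀ i < n, g (i + 1) ∈ hplane (g i)) ∧ g 0 ∈ hplane (g n)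

/-- H-cyclic monotonicity: for every closed H-sequence g₀,…,gₙ (n ≥ 1), setting
g_{n+1} = g₀, and every vᵢ ∈ T(gᵢ), ∑_{i=0}^{n} ⟨vᵢ, ξ₁(g_{i+1}) − ξ₁(gᵢ)⟩ ≤ 0. -/
def HCyclicallyMonotone (T : Heis → Set V2) : Prop :=
  ∀ n : ℕ, 1 ≤ n → ∀ g : ℕ → Heis, IsClosedHSeq n g →
    ∀ v : ℕ → V2, (∀ i ≤ n, v i ∈ T (g i)) →
      ∑ i ∈ Finset.range (n + 1),
        dot (v i) (xi1 (g ((i + 1) % (n + 1))) - xi1 (g i)) ≤ 0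

/-- Maximal H-cyclic monotonicity. -/
def MaximalHCyclicallyMonotone (T : Heis → Set V2) : Prop :=
  HCyclicallyMonotone T ∧
    ¬ ∃ T' : Heis → Set V2, HCyclicallyMonotone T' ∧ (∀ g, T g ⊆ T' g) ∧ ∃ g, T g ⊂ T' g

/-- H-convexity of u : 𝐇 → ℝ. -/
def HConvex (u : Heis → ℝ) : Prop :=
  ∀ g : Heis, ∀ w : V2, ∀ lam : ℝ, 0 ≤ lam → lam ≤ 1 →
    u (hmul g (hexp (lam • w))) ≤ u g + lam * (u (hmul g (hexp w)) - u g)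

/-- The horizontal subdifferential ∂_H u (g). -/
def Hsubdiff (u : Heis → ℝ) (g : Heis) : Set V2 :=
  {v | ∀ w : V2, u g + dot v w ≤ u (hmul g (hexp w))}

/-
Rockafellar's construction, transported to horizontal chains. Fix a base point and let `u g` be the
supremum of the sums `∑ ⟨vᵢ, ξ₁(gᵢ₊₁) − ξ₁(gᵢ)⟩` over horizontal chains from the base point to `g`
with `vᵢ ∈ T gᵢ`. Any two points of `𝐇` are joined by three horizontal steps, so chains exist, and
closing a chain back to the base point shows, by H-cyclic monotonicity, that the supremum is finite.
Prolonging a chain by one step gives `T ⊆ ∂_H u`. Subdifferential maps are H-cyclically monotone,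
so maximality forces `T = ∂_H u`, and a function with nonempty H-subdifferentials is H-convex.
-/

lemma xi1_hmul_hexp (g : Heis) (w : V2) : xi1 (hmul g (hexp w)) = xi1 g + w := rfl

lemma hmul_hexp_zero (g : Heis) : hmul g (hexp 0) = g := by
  simp [hmul, hexp]

lemma hmul_hexp_smul_hexp_smul (g : Heis) (w : V2) (a b : ℝ) :
    hmul (hmul g (hexp (a • w))) (hexp (b • w)) = hmul g (hexp ((a + b) • w)) := by
  simp only [hmul, hexp, Prod.ext_iff, Prod.smul_fst, Prod.smul_snd, smul_eq_mul]
  refine ⟨by ring, by ring, by ring⟩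

lemma dot_smul_right (v w : V2) (c : ℝ) : dot v (c • w) = c * dot v w := by
  simp only [dot, Prod.smul_fst, Prod.smul_snd, smul_eq_mul]
  ring

/-- The endpoint's `t`-coordinate is `2 * b` plus terms free of `b`, which determines `b`. -/
lemma exists_hexp_three_steps (g h : Heis) : ∃ w₁ w₂ w₃ : V2,
    hmul (hmul (hmul g (hexp w₁)) (hexp w₂)) (hexp w₃) = h := by
  set b : ℝ := (h.2.2 - g.2.2 - 2 * (h.1 - g.1) * g.2.1 + 2 * (h.1 - 1) * (h.2.1 - g.2.1)) / 2
  refine ⟨(h.1 - g.1 - 1, 0), (0, b), (1, h.2.1 - g.2.1 - b), ?_⟩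
  simp only [hmul, hexp, Prod.ext_iff, b]
  refine ⟨by ring, by ring, by ring⟩

lemma sum_range_succ_sub_mod_eq_zero {M : Type*} [AddCommGroup M] (f : ℕ → M) (n : ℕ) :
    ∑ i ∈ Finset.range (n + 1), (f ((i + 1) % (n + 1)) - f i) = 0 := by
  rw [Finset.sum_range_succ, Nat.mod_self]
  have htel : ∑ i ∈ Finset.range n, (f ((i + 1) % (n + 1)) - f i) = f n - f 0 := by
    rw [← Finset.sum_range_sub]
    refine Finset.sum_congr rfl fun i hi => ?_
    rw [Nat.mod_eq_of_lt (by simpa using hi)]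
  rw [htel, sub_add_sub_cancel, sub_self]

section Subdifferential

variable {u : Heis → ℝ}

lemma dot_le_sub_of_mem_hsubdiff {v : V2} {g h : Heis} (hv : v ∈ Hsubdiff u g)
    (hh : h ∈ hplane g) : dot v (xi1 h - xi1 g) ≤ u h - u g := by
  obtain ⟨w, rfl⟩ := hh
  rw [xi1_hmul_hexp, add_sub_cancel_left]
  linarith [hv w]

lemma hCyclicallyMonotone_hsubdiff : HCyclicallyMonotone (Hsubdiff u) := by
  intro n _ g hg v hv
  have hstep : ∀ i ∈ Finset.range (n + 1),
      dot (v i) (xi1 (g ((i + 1) % (n + 1))) - xi1 (g i))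
        ≤ u (g ((i + 1) % (n + 1))) - u (g i) := by
    intro i hi
    have hi : i ≤ n := Nat.lt_succ_iff.mp (Finset.mem_range.mp hi)
    refine dot_le_sub_of_mem_hsubdiff (hv i hi) ?_
    rcases hi.lt_or_eq with hlt | rfl
    · rw [Nat.mod_eq_of_lt (by omega)]
      exact hg.1 i hlt
    · rw [Nat.mod_self]
      exact hg.2
  exact (Finset.sum_le_sum hstep).trans (sum_range_succ_sub_mod_eq_zero (u ∘ g) n).le

lemma hConvex_of_hsubdiff_nonempty (hu : ∀ g, (Hsubdiff u g).Nonempty) : HConvex u := by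
  intro g w lam hlam₀ hlam₁
  set gl := hmul g (hexp (lam • w))
  obtain ⟨v, hv⟩ := hu gl
  have hback : u gl - lam * dot v w ≤ u g := by
    have := hv ((-lam) • w)
    rwa [hmul_hexp_smul_hexp_smul, add_neg_cancel, zero_smul, hmul_hexp_zero,
      dot_smul_right, neg_mul, ← sub_eq_add_neg] at this
  have hforth : u gl + (1 - lam) * dot v w ≤ u (hmul g (hexp w)) := by
    have := hv ((1 - lam) • w)
    rwa [hmul_hexp_smul_hexp_smul, add_sub_cancel, one_smul, dot_smul_right] at this
  nlinarith [mul_le_mul_of_nonneg_left hback (sub_nonneg.mpr hlam₁),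
    mul_le_mul_of_nonneg_left hforth hlam₀]

end Subdifferential

inductive HChainSum (T : Heis → Set V2) (base : Heis) : Heis → ℝ → Prop
  | nil : HChainSum T base base 0
  | snoc {g : Heis} {s : ℝ} {v : V2} (w : V2) :
      HChainSum T base g s → v ∈ T g → HChainSum T base (hmul g (hexp w)) (s + dot v w)

/-- `sSup` is junk unless the chain sums are nonempty and bounded above, see
`HChainSum.nonempty` and `HChainSum.bddAbove`. -/
noncomputable def chainSup (T : Heis → Set V2) (base g : Heis) : ℝ :=
  sSup {s | HChainSum T base g s}

namespace HChainSum

variable {T : Heis → Set V2} {base : Heis}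

lemma exists_seq {g : Heis} {s : ℝ} (hs : HChainSum T base g s) :
    ∃ n : ℕ, ∃ gs : ℕ → Heis, ∃ vs : ℕ → V2, gs 0 = base ∧ gs n = g ∧
      (∀ i < n, gs (i + 1) ∈ hplane (gs i)) ∧ (∀ i < n, vs i ∈ T (gs i)) ∧
      s = ∑ i ∈ Finset.range n, dot (vs i) (xi1 (gs (i + 1)) - xi1 (gs i)) := by
  induction hs with
  | nil => exact ⟨0, fun _ => base, fun _ => 0, rfl, rfl, by simp, by simp, by simp⟩
  | @snoc g s v w _ hv ih =>
    obtain ⟨n, gs, vs, h0, hn, hstep, hvs, rfl⟩ := ih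
    have hgs : ∀ i ≤ n, Function.update gs (n + 1) (hmul g (hexp w)) i = gs i :=
      fun i hi => Function.update_of_ne (by omega) _ _
    have hvs' : ∀ i < n, Function.update vs n v i = vs i :=
      fun i hi => Function.update_of_ne (by omega) _ _
    refine ⟨n + 1, Function.update gs (n + 1) (hmul g (hexp w)), Function.update vs n v,
      by rw [hgs 0 (by omega), h0], Function.update_self .., fun i hi => ?_, fun i hi => ?_, ?_⟩
    · rcases (Nat.lt_succ_iff.mp hi).lt_or_eq with hlt | rfl
      · rw [hgs i hlt.le, hgs (i + 1) hlt]
        exact hstep i hlt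
      · rw [hgs i le_rfl, hn, Function.update_self]
        exact ⟨w, rfl⟩
    · rcases (Nat.lt_succ_iff.mp hi).lt_or_eq with hlt | rfl
      · rw [hgs i hlt.le, hvs' i hlt]
        exact hvs i hlt
      · rwa [hgs i le_rfl, hn, Function.update_self]
    · rw [Finset.sum_range_succ, Function.update_self, Function.update_self, hgs n le_rfl, hn,
        xi1_hmul_hexp, add_sub_cancel_left]
      congr 1
      refine Finset.sum_congr rfl fun i hi => ?_
      have hi := Finset.mem_range.mp hi
      rw [hgs i hi.le, hgs (i + 1) hi, hvs' i hi]

lemma nonpos_of_hCyclicallyMonotone (hT : HCyclicallyMonotone T) {s : ℝ}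
    (hs : HChainSum T base base s) : s ≤ 0 := by
  obtain ⟨n, gs, vs, h0, hn, hstep, hvs, rfl⟩ := hs.exists_seq
  rcases n with _ | _ | n
  · simp
  · simp [hn, h0, dot]
  · have hcyc := hT (n + 1) (by omega) gs
      ⟨fun i hi => hstep i (by omega), by rw [h0, ← hn]; exact hstep (n + 1) (by omega)⟩
      vs fun i hi => hvs i (by omega)
    refine le_of_eq_of_le (Finset.sum_congr rfl fun i hi => ?_) hcyc
    rcases (Nat.lt_succ_iff.mp (Finset.mem_range.mp hi)).lt_or_eq with hlt | rfl
    · rw [Nat.mod_eq_of_lt (by omega)]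
    · rw [Nat.mod_self, h0, hn]

lemma exists_shift (hdom : ∀ g, (T g).Nonempty) (g h : Heis) :
    ∃ c : ℝ, ∀ s, HChainSum T base g s → HChainSum T base h (s + c) := by
  obtain ⟨w₁, w₂, w₃, rfl⟩ := exists_hexp_three_steps g h
  obtain ⟨v₁, hv₁⟩ := hdom g
  obtain ⟨v₂, hv₂⟩ := hdom (hmul g (hexp w₁))
  obtain ⟨v₃, hv₃⟩ := hdom (hmul (hmul g (hexp w₁)) (hexp w₂))
  refine ⟨dot v₁ w₁ + dot v₂ w₂ + dot v₃ w₃, fun s hs => ?_⟩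
  rw [← add_assoc, ← add_assoc]
  exact ((hs.snoc w₁ hv₁).snoc w₂ hv₂).snoc w₃ hv₃

lemma nonempty (hdom : ∀ g, (T g).Nonempty) (g : Heis) : {s | HChainSum T base g s}.Nonempty :=
  let ⟨c, hc⟩ := exists_shift hdom base g
  ⟨0 + c, hc 0 nil⟩

lemma bddAbove (hT : HCyclicallyMonotone T) (hdom : ∀ g, (T g).Nonempty) (g : Heis) :
    BddAbove {s | HChainSum T base g s} := by
  obtain ⟨c, hc⟩ := exists_shift hdom g base
  exact ⟨-c, fun s hs => by linarith [nonpos_of_hCyclicallyMonotone hT (hc s hs)]⟩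

end HChainSum

lemma subset_hsubdiff_chainSup {T : Heis → Set V2} (hT : HCyclicallyMonotone T)
    (hdom : ∀ g, (T g).Nonempty) (base g : Heis) : T g ⊆ Hsubdiff (chainSup T base) g := by
  intro v hv w
  have hle : chainSup T base g ≤ chainSup T base (hmul g (hexp w)) - dot v w :=
    csSup_le (HChainSum.nonempty hdom g) fun s hs =>
      le_sub_iff_add_le.mpr (le_csSup (HChainSum.bddAbove hT hdom _) (hs.snoc w hv))
  linarith

lemma MaximalHCyclicallyMonotone.eq_of_subset {T T' : Heis → Set V2}
    (hT : MaximalHCyclicallyMonotone T) (hT' : HCyclicallyMonotone T') (hle : ∀ g, T g ⊆ T' g)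
    (g : Heis) : T g = T' g := by
  by_contra hne
  exact hT.2 ⟨T', hT', hle, g, (hle g).ssubset_of_ne hne⟩

/-- a maximal H-cyclically monotone map with dom(T) = 𝐇 is the
H-subdifferential map of some H-convex function. -/
theorem stmt4 (T : Heis → Set V2)
    (hdom : ∀ g : Heis, (T g).Nonempty)
    (hmax : MaximalHCyclicallyMonotone T) :
    ∃ u : Heis → ℝ, HConvex u ∧ ∀ g : Heis, T g = Hsubdiff u g := by
  have hsub := subset_hsubdiff_chainSup hmax.1 hdom 0
  refine ⟨chainSup T 0, hConvex_of_hsubdiff_nonempty fun g => (hdom g).mono (hsub g), ?_⟩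
  exact hmax.eq_of_subset hCyclicallyMonotone_hsubdiff hsub
end

section
/- The function u : 𝐇 → ℝ, u(x,y,t) = (3/2)x² + 2y² + t, is H-convex, and its H-subdifferential at every g = (x,y,t) ∈ 𝐇 is the singleton ∂_H u(g) = {(3x + 2y, −2x + 4y)}. Consequently, the single-valued map T(x,y,t) = (3x + 2y, −2x + 4y), viewed as the set-valued map g ↦ {T(g)}, is maximal H-cyclically monotone. -/
/-!
Along horizontal lines, `u(g ∘ exp w) = u(g) + ⟨T(g), w⟩ + q(w)` with the positive definite
quadratic form `q(w) = (3/2)w₁² + 2w₂²`: the Heisenberg twist `2(x'y − xy')` in the `t`-coordinate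
contributes exactly the skew part `(2y, −2x)` of `T`. Homogeneity and positivity of `q` give
H-convexity, and `q(w) = O(|w|²)` pins the subdifferential down to `T(g)`. Summing the
subgradient inequality along a closed H-sequence telescopes, so `T` is H-cyclically monotone.
An H-cyclically monotone extension is H-monotone (use two-point cycles), and testing a new value
`v ∈ T'(g)` against `T(g ∘ exp w)` gives `⟨v − T(g), w⟩ ≤ 3w₁² + 4w₂²` for all `w`, so `v = T(g)`.
-/

open Finset

lemma xi1_hmul_hexp_sub (g : Heis) (w : V2) : xi1 (hmul g (hexp w)) - xi1 g = w := by
  obtain ⟨x, y, t⟩ := g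
  obtain ⟨a, b⟩ := w
  simp [xi1, hmul, hexp]

lemma hmul_hexp_hexp_neg (g : Heis) (w : V2) : hmul (hmul g (hexp w)) (hexp (-w)) = g := by
  obtain ⟨x, y, t⟩ := g
  obtain ⟨a, b⟩ := w
  simp only [hmul, hexp, Prod.fst_neg, Prod.snd_neg, Prod.mk.injEq]
  refine ⟨?_, ?_, ?_⟩ <;> ring

lemma mem_hplane_comm {g g' : Heis} (h : g' ∈ hplane g) : g ∈ hplane g' := by
  obtain ⟨w, rfl⟩ := h
  exact ⟨-w, (hmul_hexp_hexp_neg g w).symm⟩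

lemma eq_zero_of_forall_dot_le_mul_dot_self {d : V2} {c : ℝ} (h : ∀ w, dot d w ≤ c * dot w w) :
    d = 0 := by
  -- test against `w = s • d` with `s = 1/(|c|+1)`, so that `c s < 1`
  set s : ℝ := 1 / (|c| + 1)
  have hs : 0 < s := by positivity
  have hcs : c * s < 1 := by
    have : c * s = c / (|c| + 1) := by ring
    rw [this, div_lt_one (by positivity)]
    linarith [le_abs_self c]
  have hd := h (s • d)
  simp only [dot, Prod.smul_fst, Prod.smul_snd, smul_eq_mul] at hd
  have hsq : d.1 ^ 2 + d.2 ^ 2 ≤ 0 := by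
    nlinarith [mul_pos hs (sub_pos.2 hcs), sq_nonneg d.1, sq_nonneg d.2]
  have h1 : d.1 = 0 := by nlinarith [sq_nonneg d.1, sq_nonneg d.2]
  have h2 : d.2 = 0 := by nlinarith [sq_nonneg d.1, sq_nonneg d.2]
  exact Prod.ext h1 h2

lemma sum_range_succ_mod_shift {M : Type*} [AddCommMonoid M] (f : ℕ → M) (n : ℕ) :
    ∑ i ∈ range (n + 1), f ((i + 1) % (n + 1)) = ∑ i ∈ range (n + 1), f i := by
  rw [sum_range_succ, Nat.mod_self, sum_range_succ']
  congr 1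
  refine sum_congr rfl fun i hi => ?_
  rw [Nat.mod_eq_of_lt (by simp at hi; omega)]

section Expansion

variable {u : Heis → ℝ} {F : Heis → V2} {q : V2 → ℝ}
  (hu : ∀ g w, u (hmul g (hexp w)) = u g + dot (F g) w + q w)
include hu

lemma hConvex_of_expansion (hq : ∀ w, 0 ≤ q w) (hq_smul : ∀ (r : ℝ) w, q (r • w) = r ^ 2 * q w) :
    HConvex u := by
  intro g w r hr0 hr1
  have hlin : dot (F g) (r • w) = r * dot (F g) w := by
    simp only [dot, Prod.smul_fst, Prod.smul_snd, smul_eq_mul]; ring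
  rw [hu, hu, hlin, hq_smul]
  nlinarith [mul_nonneg (mul_nonneg hr0 (sub_nonneg.2 hr1)) (hq w)]

lemma hsubdiff_eq_singleton_of_expansion {c : ℝ} (hq : ∀ w, 0 ≤ q w)
    (hq_le : ∀ w, q w ≤ c * dot w w) (g : Heis) : Hsubdiff u g = {F g} := by
  ext v
  simp only [Hsubdiff, Set.mem_ofPred_eq, Set.mem_singleton_iff]
  constructor
  · intro hv
    refine sub_eq_zero.1 (eq_zero_of_forall_dot_le_mul_dot_self (c := c) fun w => ?_)
    have hsub : dot (v - F g) w = dot v w - dot (F g) w := by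
      simp only [dot, Prod.fst_sub, Prod.snd_sub]; ring
    linarith [hv w, hu g w, hq_le w]
  · rintro rfl w
    linarith [hu g w, hq w]

end Expansion

lemma HCyclicallyMonotone.of_subset_hsubdiff {u : Heis → ℝ} {T : Heis → Set V2}
    (hT : ∀ g, T g ⊆ Hsubdiff u g) : HCyclicallyMonotone T := by
  intro n _ g hseq v hv
  have hstep : ∀ i ∈ range (n + 1), dot (v i) (xi1 (g ((i + 1) % (n + 1))) - xi1 (g i)) ≤
      u (g ((i + 1) % (n + 1))) - u (g i) := by
    intro i hi
    have hi : i ≤ n := Nat.lt_succ_iff.1 (mem_range.1 hi)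
    have hnext : g ((i + 1) % (n + 1)) ∈ hplane (g i) := by
      rcases hi.lt_or_eq with hlt | rfl
      · rw [Nat.mod_eq_of_lt (by omega)]
        exact hseq.1 i hlt
      · rw [Nat.mod_self]
        exact hseq.2
    obtain ⟨w, hw⟩ := hnext
    rw [hw, xi1_hmul_hexp_sub]
    linarith [hT (g i) (hv i hi) w]
  calc _ ≤ ∑ i ∈ range (n + 1), (u (g ((i + 1) % (n + 1))) - u (g i)) := sum_le_sum hstep
    _ = 0 := by
      rw [sum_sub_distrib, sum_range_succ_mod_shift (fun i => u (g i)), sub_self]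

lemma HCyclicallyMonotone.hMonotone {T : Heis → Set V2} (hT : HCyclicallyMonotone T) :
    HMonotone T := by
  intro g g' hg' v hv v' hv'
  let seq : ℕ → Heis := fun i => if i = 0 then g else g'
  let vals : ℕ → V2 := fun i => if i = 0 then v else v'
  have hseq : IsClosedHSeq 1 seq := ⟨fun i hi => by simpa [seq, Nat.lt_one_iff.1 hi] using hg',
    by simpa [seq] using mem_hplane_comm hg'⟩
  have hvals : ∀ i ≤ 1, vals i ∈ T (seq i) := by
    intro i hi
    interval_cases i
    · simpa [vals, seq] using hv
    · simpa [vals, seq] using hv'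
  have hcyc := hT 1 le_rfl seq hseq vals hvals
  simp only [sum_range_succ, sum_range_zero, seq, vals, dot] at hcyc
  simp only [dot, Prod.fst_sub, Prod.snd_sub]
  norm_num at hcyc
  linarith

lemma maximalHCyclicallyMonotone_singleton {F : Heis → V2} {c : ℝ}
    (hF : HCyclicallyMonotone fun g => {F g})
    (hF_le : ∀ g w, dot (F (hmul g (hexp w)) - F g) w ≤ c * dot w w) :
    MaximalHCyclicallyMonotone fun g => {F g} := by
  refine ⟨hF, ?_⟩
  rintro ⟨T', hT', hsub, g, hstrict⟩
  obtain ⟨v, hvT', hvF⟩ := Set.exists_of_ssubset hstrict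
  refine hvF (sub_eq_zero.1 (eq_zero_of_forall_dot_le_mul_dot_self (c := c) fun w => ?_))
  have hmono := hT'.hMonotone g _ ⟨w, rfl⟩ v hvT' (F (hmul g (hexp w)))
    (hsub _ (Set.mem_singleton _))
  rw [xi1_hmul_hexp_sub] at hmono
  have hsplit : dot (v - F g) w =
      dot (F (hmul g (hexp w)) - F g) w - dot (F (hmul g (hexp w)) - v) w := by
    simp only [dot, Prod.fst_sub, Prod.snd_sub]; ring
  linarith [hF_le g w]

/-- The horizontal gradient `(Xu, Yu)` of `u(x,y,t) = (3/2)x² + 2y² + t`. -/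
def hGradU (g : Heis) : V2 := (3 * g.1 + 2 * g.2.1, -2 * g.1 + 4 * g.2.1)

lemma hGradU_hmul_hexp_sub_dot (g : Heis) (w : V2) :
    dot (hGradU (hmul g (hexp w)) - hGradU g) w = 3 * w.1 ^ 2 + 4 * w.2 ^ 2 := by
  obtain ⟨x, y, t⟩ := g
  obtain ⟨a, b⟩ := w
  simp only [hGradU, hmul, hexp, dot, Prod.fst_sub, Prod.snd_sub]
  ring

/-- u(x,y,t) = (3/2)x² + 2y² + t is H-convex, its
H-subdifferential is the singleton {(3x+2y, −2x+4y)}, and the corresponding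
set-valued map is maximal H-cyclically monotone. -/
theorem stmt13 (u : Heis → ℝ)
    (hu : ∀ x y t : ℝ, u (x, y, t) = 3 / 2 * x ^ 2 + 2 * y ^ 2 + t)
    (T : Heis → Set V2)
    (hT : ∀ x y t : ℝ, T (x, y, t) = {(3 * x + 2 * y, -2 * x + 4 * y)}) :
    HConvex u ∧ (∀ g : Heis, Hsubdiff u g = T g) ∧ MaximalHCyclicallyMonotone T := by
  have hT_eq : T = fun g => {hGradU g} := funext fun ⟨x, y, t⟩ => hT x y t
  have hexpand : ∀ g w, u (hmul g (hexp w)) =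
      u g + dot (hGradU g) w + (3 / 2 * w.1 ^ 2 + 2 * w.2 ^ 2) := by
    rintro ⟨x, y, t⟩ ⟨a, b⟩
    simp only [hmul, hexp, hu, dot, hGradU]
    ring
  have hq : ∀ w : V2, 0 ≤ 3 / 2 * w.1 ^ 2 + 2 * w.2 ^ 2 := fun w => by positivity
  have hsubdiff := hsubdiff_eq_singleton_of_expansion hexpand hq (c := 2)
    (fun w => by simp only [dot]; nlinarith [sq_nonneg w.1, sq_nonneg w.2])
  subst hT_eq
  refine ⟨hConvex_of_expansion hexpand hq fun r w => ?_, hsubdiff, ?_⟩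
  · simp only [Prod.smul_fst, Prod.smul_snd, smul_eq_mul]; ring
  refine maximalHCyclicallyMonotone_singleton (c := 4)
    (.of_subset_hsubdiff fun g => (hsubdiff g).symm.subset) fun g w => ?_
  rw [hGradU_hmul_hexp_sub_dot]
  simp only [dot]
  nlinarith [sq_nonneg w.1, sq_nonneg w.2]
end
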